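/- arXiv:1603.05186 — 2 statements merged into one kernel-verified Lean document; each statement's English description precedes it below -/
import Mathlib

section
/- Let u be an analytic solution of the Helmholtz equation Δu + k²u = 0 on a neighbourhood of the origin in ℝⁿ (n = 2 or 3), with k ∈ ℂ. Suppose all partial derivatives of u of order strictly less than M vanish at the origin. Then the homogeneous Taylor polynomial of u of degree M at the origin is a harmonic polynomial, and so is the homogeneous Taylor polynomial of degree M+1. -/
open Metric

/-- Euclidean Laplacian: sum of second derivatives in the coordinate directions. -/
noncomputable def lapE {n : ℕ} (f : EuclideanSpace ℝ (Fin n) → ℂ)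
    (x : EuclideanSpace ℝ (Fin n)) : ℂ :=
  ∑ i : Fin n, iteratedFDeriv ℝ 2 f x ![EuclideanSpace.single i 1, EuclideanSpace.single i 1]

/-!
Write `u = ∑ P_m` near the origin, with `P_m` the homogeneous Taylor terms. The Laplacian lowers
degrees by two, so comparing homogeneous parts in `Δu = -k²u` gives `ΔP_(m+2) = -k² P_m`, while
`ΔP_0 = ΔP_1 = 0`. As `P_m = 0` for `m < M`, both `ΔP_M` and `ΔP_(M+1)` vanish.
-/

open Filter Topology Nat FormalMultilinearSeries

section PowerSeries

variable {𝕜 : Type*} [NontriviallyNormedField 𝕜] {E F : Type*} [NormedAddCommGroup E]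
  [NormedSpace 𝕜 E] [NormedAddCommGroup F] [NormedSpace 𝕜 F]

theorem FormalMultilinearSeries.derivSeries_congr {p q : FormalMultilinearSeries 𝕜 E F} {j : ℕ}
    (h : p (j + 1) = q (j + 1)) : p.derivSeries j = q.derivSeries j := by
  rw [add_comm] at h
  simp only [derivSeries, ContinuousLinearMap.compFormalMultilinearSeries_apply, changeOriginSeries,
    changeOriginSeriesTerm, h]

theorem FormalMultilinearSeries.derivSeries_derivSeries_pi_single_self
    (p : FormalMultilinearSeries 𝕜 E F) (j : ℕ) :
    derivSeries (derivSeries (Pi.single (j + 2) (p (j + 2)))) j =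
      p.derivSeries.derivSeries j :=
  derivSeries_congr (derivSeries_congr (Pi.single_eq_same _ _))

theorem FormalMultilinearSeries.derivSeries_derivSeries_pi_single_of_ne {m j : ℕ}
    (C : ContinuousMultilinearMap 𝕜 (fun _ : Fin m => E) F) (h : j + 2 ≠ m) :
    derivSeries (derivSeries (Pi.single m C)) j = 0 :=
  derivSeries_eq_zero _ (derivSeries_eq_zero _ (Pi.single_eq_of_ne h _))

theorem hasFPowerSeriesOnBall_pi_single {m : ℕ}
    (C : ContinuousMultilinearMap 𝕜 (fun _ : Fin m => E) F) :
    HasFPowerSeriesOnBall (fun y => C fun _ => y) (Pi.single m C : FormalMultilinearSeries 𝕜 E F)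
      0 ⊤ := by
  refine (HasFiniteFPowerSeriesOnBall.mk' (n := m + 1)
    (fun j hj => Pi.single_eq_of_ne (Nat.ne_of_gt hj) _) ENNReal.zero_lt_top
    fun y _ => ?_).toHasFPowerSeriesOnBall
  rw [Finset.sum_eq_single_of_mem m (Finset.self_mem_range_succ m), Pi.single_eq_same, zero_add]
  intro j _ hj
  rw [Pi.single_eq_of_ne hj]
  rfl

theorem HasFPowerSeriesAt.apply_diag_eq_inv_factorial_smul [CompleteSpace F] {𝕂 : Type*}
    [DivisionRing 𝕂] [CharZero 𝕂] [Module 𝕂 F] {f : E → F} {p : FormalMultilinearSeries 𝕜 E F}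
    {x : E} (hf : HasFPowerSeriesAt f p x) (m : ℕ) (y : E) :
    p m (fun _ => y) = (m ! : 𝕂)⁻¹ • iteratedFDeriv 𝕜 m f x fun _ => y := by
  obtain ⟨r, hf⟩ := hf
  rw [← hf.factorial_smul, ← Nat.cast_smul_eq_nsmul 𝕂,
    inv_smul_smul₀ (Nat.cast_ne_zero.2 m.factorial_ne_zero)]

end PowerSeries

section Laplacian

variable {n : ℕ}

noncomputable def hessianTrace (n : ℕ) :
    (EuclideanSpace ℝ (Fin n) →L[ℝ] EuclideanSpace ℝ (Fin n) →L[ℝ] ℂ) →L[ℝ] ℂ :=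
  ∑ i : Fin n, (ContinuousLinearMap.apply ℝ ℂ (EuclideanSpace.single i 1)).comp
    (ContinuousLinearMap.apply ℝ _ (EuclideanSpace.single i 1))

theorem lapE_eq_comp (f : EuclideanSpace ℝ (Fin n) → ℂ) :
    lapE f = hessianTrace n ∘ fderiv ℝ (fderiv ℝ f) := by
  ext x
  simp [lapE, hessianTrace, iteratedFDeriv_two_apply]

theorem hasSum_lapE_apply_diag {m : ℕ}
    (C : ContinuousMultilinearMap ℝ (fun _ : Fin m => EuclideanSpace ℝ (Fin n)) ℂ)
    (x : EuclideanSpace ℝ (Fin n)) :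
    HasSum (fun j => hessianTrace n (derivSeries (derivSeries (Pi.single m C)) j fun _ => x))
      (lapE (fun y => C fun _ => y) x) := by
  have hC := (hessianTrace n).comp_hasFPowerSeriesOnBall
    (hasFPowerSeriesOnBall_pi_single C).fderiv.fderiv
  rw [lapE_eq_comp]
  simpa using hC.hasSum (y := x) (by simp)

theorem lapE_apply_diag_add_two (p : FormalMultilinearSeries ℝ (EuclideanSpace ℝ (Fin n)) ℂ)
    (j : ℕ) (x : EuclideanSpace ℝ (Fin n)) :
    lapE (fun y => p (j + 2) fun _ => y) x =
      hessianTrace n (p.derivSeries.derivSeries j fun _ => x) := by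
  rw [← derivSeries_derivSeries_pi_single_self p j]
  refine (hasSum_lapE_apply_diag (p (j + 2)) x).unique (hasSum_single j fun i hi => ?_)
  rw [derivSeries_derivSeries_pi_single_of_ne _ (by omega)]
  simp

theorem lapE_apply_diag_of_lt_two {m : ℕ}
    (C : ContinuousMultilinearMap ℝ (fun _ : Fin m => EuclideanSpace ℝ (Fin n)) ℂ) (hm : m < 2)
    (x : EuclideanSpace ℝ (Fin n)) : lapE (fun y => C fun _ => y) x = 0 := by
  refine (hasSum_lapE_apply_diag C x).unique ?_
  convert hasSum_zero with j
  rw [derivSeries_derivSeries_pi_single_of_ne C (by omega)]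
  simp

theorem HasFPowerSeriesAt.lapE_apply_diag_add_two_of_helmholtz {u : EuclideanSpace ℝ (Fin n) → ℂ}
    {p : FormalMultilinearSeries ℝ (EuclideanSpace ℝ (Fin n)) ℂ} {x : EuclideanSpace ℝ (Fin n)}
    {k : ℂ} (hu : HasFPowerSeriesAt u p x) (hhelm : ∀ᶠ y in 𝓝 x, lapE u y + k ^ 2 * u y = 0)
    (j : ℕ) (y : EuclideanSpace ℝ (Fin n)) :
    lapE (fun z => p (j + 2) fun _ => z) y = -k ^ 2 * p j fun _ => y := by
  obtain ⟨r, hu⟩ := hu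
  have hseries := (((hessianTrace n).comp_hasFPowerSeriesOnBall hu.fderiv.fderiv).add
    (hu.const_smul (c := k ^ 2))).hasFPowerSeriesAt
  rw [← lapE_eq_comp] at hseries
  have hcoeff := (hseries.congr (hhelm.mono fun z hz => by simpa using hz)).apply_eq_zero j y
  simp only [FormalMultilinearSeries.add_apply,
    ContinuousLinearMap.compFormalMultilinearSeries_apply, FormalMultilinearSeries.smul_apply,
    _root_.add_apply, ContinuousLinearMap.compContinuousMultilinearMap_coe, Function.comp_apply,
    _root_.smul_apply, smul_eq_mul] at hcoeff
  rw [lapE_apply_diag_add_two]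
  linear_combination hcoeff

end Laplacian

theorem taylor_terms_harmonic_general {n : ℕ} (k : ℂ) (M : ℕ) (ε : ℝ) (hε : 0 < ε)
    (u : EuclideanSpace ℝ (Fin n) → ℂ)
    (hu_an : AnalyticOnNhd ℝ u (ball 0 ε))
    (hu_helm : ∀ x ∈ ball (0 : EuclideanSpace ℝ (Fin n)) ε, lapE u x + k ^ 2 * u x = 0)
    (hvanish : ∀ j < M, iteratedFDeriv ℝ j u 0 = 0) :
    (∀ x, lapE (fun y => ((M.factorial : ℂ))⁻¹ • iteratedFDeriv ℝ M u 0 (fun _ => y)) x = 0) ∧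
    (∀ x, lapE (fun y => (((M + 1).factorial : ℂ))⁻¹ • iteratedFDeriv ℝ (M + 1) u 0 (fun _ => y)) x = 0) := by
  obtain ⟨p, hp⟩ := hu_an 0 (mem_ball_self hε)
  have hhelm : ∀ᶠ y in 𝓝 0, lapE u y + k ^ 2 * u y = 0 :=
    eventually_of_mem (ball_mem_nhds 0 hε) hu_helm
  have htaylor (m : ℕ) : (fun y => (m ! : ℂ)⁻¹ • iteratedFDeriv ℝ m u 0 fun _ => y) =
      fun y => p m fun _ => y :=
    funext fun y => (hp.apply_diag_eq_inv_factorial_smul m y).symm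
  have hlow {j : ℕ} (hj : j < M) (y : EuclideanSpace ℝ (Fin n)) : (p j fun _ => y) = 0 := by
    simp [hp.apply_diag_eq_inv_factorial_smul (𝕂 := ℂ), hvanish j hj]
  have harmonic {m : ℕ} (hm : ∀ j, j + 2 = m → j < M) (x : EuclideanSpace ℝ (Fin n)) :
      lapE (fun y => p m fun _ => y) x = 0 := by
    rcases lt_or_ge m 2 with hm2 | hm2
    · exact lapE_apply_diag_of_lt_two _ hm2 x
    · obtain ⟨j, rfl⟩ := Nat.exists_eq_add_of_le' hm2
      rw [hp.lapE_apply_diag_add_two_of_helmholtz hhelm, hlow (hm j rfl), mul_zero]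
  simp only [htaylor]
  exact ⟨harmonic (by omega), harmonic (by omega)⟩

/-- If `u` is an analytic solution of the Helmholtz equation `Δu + k²u = 0` near the origin
in ℝⁿ (n = 2 or 3), all of whose partial derivatives of order `< M` vanish at the origin, then
the homogeneous Taylor polynomials of `u` of degrees `M` and `M+1` at the origin are harmonic. -/
theorem taylor_terms_harmonic {n : ℕ} (hn : n = 2 ∨ n = 3) (k : ℂ) (M : ℕ) (ε : ℝ) (hε : 0 < ε)
    (u : EuclideanSpace ℝ (Fin n) → ℂ)
    (hu_an : AnalyticOnNhd ℝ u (ball 0 ε))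
    (hu_helm : ∀ x ∈ ball (0 : EuclideanSpace ℝ (Fin n)) ε, lapE u x + k ^ 2 * u x = 0)
    (hvanish : ∀ j < M, iteratedFDeriv ℝ j u 0 = 0) :
    (∀ x, lapE (fun y => ((M.factorial : ℂ))⁻¹ • iteratedFDeriv ℝ M u 0 (fun _ => y)) x = 0) ∧
    (∀ x, lapE (fun y => (((M + 1).factorial : ℂ))⁻¹ • iteratedFDeriv ℝ (M + 1) u 0 (fun _ => y)) x = 0) :=
  taylor_terms_harmonic_general k M ε hε u hu_an hu_helm hvanish
end

section
/- Let m ≥ 2 be a natural number and let ζ ∈ ℂ satisfy |ζ| = 1 and ζ ≠ −1. Then m² ζ^{m-1} (1 + ζ)² + (−1)^m ((−1)^m ζ^m − 1)² ≠ 0. -/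
/-! Put `v = -ζ`, so `‖v‖ = 1` and `v ≠ 1`. Writing `v ^ m - 1 = (v - 1) ∑_{i<m} v ^ i`, the
expression is `±(1 + ζ)² (m² v^(m-1) - (∑_{i<m} v ^ i)²)`. The first term has norm `m²`, while by
the strict triangle inequality `‖1 + v‖ < 2` the geometric sum has norm `< m`. -/

open Finset

theorem Complex.norm_one_add_lt_two {v : ℂ} (hv : ‖v‖ = 1) (hv1 : v ≠ 1) : ‖1 + v‖ < 2 := by
  have : ¬SameRay ℝ 1 v := fun h => hv1 (h.eq_of_norm_eq (by simp [hv])).symm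
  calc ‖1 + v‖ < ‖(1 : ℂ)‖ + ‖v‖ := norm_add_lt_of_not_sameRay this
    _ = 2 := by rw [hv]; norm_num

theorem Complex.norm_geom_sum_lt {v : ℂ} (hv : ‖v‖ = 1) (hv1 : v ≠ 1) {m : ℕ} (hm : 2 ≤ m) :
    ‖∑ i ∈ range m, v ^ i‖ < m := by
  obtain ⟨n, rfl⟩ := Nat.exists_eq_add_of_le' hm
  have htail : ‖∑ i ∈ range n, v ^ (i + 2)‖ ≤ n :=
    (norm_sum_le _ _).trans (by simp [norm_pow, hv])
  calc ‖∑ i ∈ range (n + 2), v ^ i‖ = ‖∑ i ∈ range n, v ^ (i + 2) + (1 + v)‖ := by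
        simp only [sum_range_succ']; ring_nf
    _ ≤ ‖∑ i ∈ range n, v ^ (i + 2)‖ + ‖1 + v‖ := norm_add_le _ _
    _ < n + 2 := by linarith [Complex.norm_one_add_lt_two hv hv1]
    _ = _ := by push_cast; ring

theorem corner_expression_eq {R : Type*} [CommRing R] (ζ : R) (n : ℕ) :
    ((n + 1 : ℕ) : R) ^ 2 * ζ ^ n * (1 + ζ) ^ 2
        + (-1) ^ (n + 1) * ((-1) ^ (n + 1) * ζ ^ (n + 1) - 1) ^ 2
      = (-1) ^ n * (1 + ζ) ^ 2 *
          (((n + 1 : ℕ) : R) ^ 2 * (-ζ) ^ n - (∑ i ∈ range (n + 1), (-ζ) ^ i) ^ 2) := by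
  have hgeom := geom_sum_mul_neg (-ζ) (n + 1)
  have hsign : (-1 : R) ^ n * (-1) ^ n = 1 := by rw [← mul_pow]; norm_num
  rw [neg_pow] at hgeom ⊢
  rw [sub_neg_eq_add] at hgeom
  linear_combination
    ((-1) ^ n * ((∑ i ∈ range (n + 1), (-ζ) ^ i) * (1 + ζ) + 1 - (-1) ^ (n + 1) * ζ ^ (n + 1)))
      * hgeom - (((n + 1 : ℕ) : R) ^ 2 * ζ ^ n * (1 + ζ) ^ 2) * hsign

/-- For `m ≥ 2`, `|ζ| = 1`, `ζ ≠ -1`, the determinant expression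
`m² ζ^{m-1} (1+ζ)² + (−1)^m ((−1)^m ζ^m − 1)²` does not vanish. -/
theorem corner_determinant_ne_zero (m : ℕ) (hm : 2 ≤ m) (ζ : ℂ)
    (hζ : ‖ζ‖ = 1) (hζ1 : ζ ≠ -1) :
    (m : ℂ) ^ 2 * ζ ^ (m - 1) * (1 + ζ) ^ 2
      + (-1 : ℂ) ^ m * ((-1 : ℂ) ^ m * ζ ^ m - 1) ^ 2 ≠ 0 := by
  obtain ⟨n, rfl⟩ : ∃ n, m = n + 1 := ⟨m - 1, by omega⟩
  rw [Nat.add_sub_cancel, corner_expression_eq]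
  have hv : ‖-ζ‖ = 1 := by rwa [norm_neg]
  have hv1 : -ζ ≠ 1 := fun h => hζ1 (neg_eq_iff_eq_neg.mp h)
  have hsum := Complex.norm_geom_sum_lt hv hv1 hm
  refine mul_ne_zero (mul_ne_zero (by simp) (pow_ne_zero 2 ?_)) (sub_ne_zero.mpr fun h => ?_)
  · rwa [Ne, add_eq_zero_iff_neg_eq, eq_comm]
  · have := congrArg norm h
    simp only [norm_mul, norm_pow, hv, one_pow, mul_one, Complex.norm_natCast] at this
    nlinarith [norm_nonneg (∑ i ∈ range (n + 1), (-ζ) ^ i)]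
end
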